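/- Let $(f_\lambda)_{\lambda \in \Lambda}$ be a holomorphic family of polynomials of degree $d \geq 2$ over a complex manifold $\Lambda$, with monic centered $f_\lambda$ depending holomorphically on $\lambda$, and let $\lambda \mapsto a(\lambda)$ be a holomorphic marked point. Then the function $\lambda \mapsto G_{f_\lambda}(a(\lambda))$ is continuous and plurisubharmonic on $\Lambda$. -/

import Mathlib

/-!
Write `g_n(λ) = d⁻ⁿ log⁺ |f_λⁿ(a(λ))|`. Each `g_n` is continuous, and it satisfies the sub-mean
value inequality on complex discs: by Jensen's formula `log |h|` does for every holomorphic `h`,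
hence so does `log⁺ |h| = max (log |h|) 0`. For a monic polynomial `p` of degree `d` the difference
`log⁺ |p(z)| - d log⁺ |z|` is bounded by a constant depending continuously on the coefficients, so
`|g_{n+1} - g_n| = O(d⁻ⁿ)` locally uniformly in `λ`. Hence `g_n → G` locally uniformly, and
continuity and the sub-mean value inequality pass to the limit.
-/

open Filter

/-- `log⁺ = max(log, 0)`. -/
noncomputable def posLog (x : ℝ) : ℝ := max (Real.log x) 0

open Metric Topology Set
open scoped Real

theorem posLog_eq_real_posLog : posLog = Real.posLog :=
  funext fun _ => max_comm _ _

theorem AnalyticOnNhd.log_norm_le_circleAverage {c : ℂ} {R : ℝ} {f : ℂ → ℂ} (hR : R ≠ 0)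
    (hf : AnalyticOnNhd ℂ f (closedBall c |R|)) (h₀ : f c ≠ 0) :
    Real.log ‖f c‖ ≤ Real.circleAverage (Real.log ‖f ·‖) c R := by
  -- Jensen's formula; each zero `u` in the disc contributes `ord_u f * log (|R| / ‖c - u‖) ≥ 0`.
  rw [hf.circleAverage_log_norm hR h₀, le_add_iff_nonneg_left]
  refine finsum_nonneg fun u => ?_
  by_cases hu : u ∈ closedBall c |R|
  · refine mul_nonneg (by exact_mod_cast MeromorphicOn.AnalyticOnNhd.divisor_nonneg hf u) ?_
    rw [← Real.log_abs, abs_mul, abs_inv, abs_norm]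
    rcases eq_or_ne u c with rfl | huc
    · simp
    · rw [← div_eq_mul_inv]
      refine Real.log_nonneg ((one_le_div (norm_pos_iff.2 (sub_ne_zero.2 huc.symm))).2 ?_)
      simpa [dist_eq_norm, norm_sub_rev] using hu
  · simp [Function.locallyFinsuppWithin.apply_eq_zero_of_notMem _ hu]

theorem AnalyticOnNhd.posLog_norm_le_circleAverage {c : ℂ} {R : ℝ} {f : ℂ → ℂ} (hR : R ≠ 0)
    (hf : AnalyticOnNhd ℂ f (closedBall c |R|)) :
    log⁺ ‖f c‖ ≤ Real.circleAverage (log⁺ ‖f ·‖) c R := by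
  rcases le_or_gt ‖f c‖ 1 with h | h
  · rw [(Real.posLog_eq_zero_iff _).2 (by rwa [abs_norm])]
    exact Real.circleAverage_nonneg_of_nonneg fun _ _ => Real.posLog_nonneg
  have hsphere := hf.mono sphere_subset_closedBall
  calc log⁺ ‖f c‖ = Real.log ‖f c‖ := Real.posLog_eq_log (by rw [abs_norm]; exact h.le)
    _ ≤ Real.circleAverage (Real.log ‖f ·‖) c R :=
      hf.log_norm_le_circleAverage hR (norm_pos_iff.1 (one_pos.trans h))
    _ ≤ Real.circleAverage (log⁺ ‖f ·‖) c R :=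
      Real.circleAverage_mono hsphere.meromorphicOn.circleIntegrable_log_norm
        (Real.continuous_posLog.comp_continuousOn hsphere.continuousOn.norm).circleIntegrable'
        fun _ _ => le_max_right _ _

theorem DifferentiableOn.posLog_norm_comp_le_circleAverage {E : Type*} [NormedAddCommGroup E]
    [NormedSpace ℂ E] {Λ : Set E} (hΛ : IsOpen Λ) {h : E → ℂ} (hh : DifferentiableOn ℂ h Λ)
    {φ : ℂ → E} (hφ : Differentiable ℂ φ) {c : ℂ} {R : ℝ} (hR : R ≠ 0)
    (hU : closedBall c |R| ⊆ φ ⁻¹' Λ) :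
    log⁺ ‖h (φ c)‖ ≤ Real.circleAverage (fun w => log⁺ ‖h (φ w)‖) c R :=
  AnalyticOnNhd.posLog_norm_le_circleAverage hR
    (((hh.comp hφ.differentiableOn (mapsTo_preimage _ _)).analyticOnNhd
      (hΛ.preimage hφ.continuous)).mono hU)

theorem norm_sum_mul_pow_mul_max_le {𝕜 : Type*} [NormedField 𝕜] {t : Finset ℕ} {d : ℕ}
    (ht : ∀ j ∈ t, j < d) (co : ℕ → 𝕜) (z : 𝕜) :
    ‖∑ j ∈ t, co j * z ^ j‖ * max 1 ‖z‖ ≤ (∑ j ∈ t, ‖co j‖) * max 1 ‖z‖ ^ d := by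
  set m := max 1 ‖z‖
  have hm : 1 ≤ m := le_max_left _ _
  calc ‖∑ j ∈ t, co j * z ^ j‖ * m ≤ (∑ j ∈ t, ‖co j‖ * m ^ j) * m := by
        gcongr
        refine (norm_sum_le _ _).trans (Finset.sum_le_sum fun j _ => ?_)
        rw [norm_mul, norm_pow]
        gcongr
        exact le_max_right _ _
    _ = ∑ j ∈ t, ‖co j‖ * m ^ (j + 1) := by
        rw [Finset.sum_mul]
        exact Finset.sum_congr rfl fun j _ => by ring
    _ ≤ ∑ j ∈ t, ‖co j‖ * m ^ d :=
        Finset.sum_le_sum fun j hj => by gcongr; exact ht j hj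
    _ = (∑ j ∈ t, ‖co j‖) * m ^ d := (Finset.sum_mul _ _ _).symm

theorem posLog_norm_monic_le {𝕜 : Type*} [NormedField 𝕜] {t : Finset ℕ} {d : ℕ}
    (ht : ∀ j ∈ t, j < d) (co : ℕ → 𝕜) (z : 𝕜) :
    log⁺ ‖z ^ d + ∑ j ∈ t, co j * z ^ j‖ ≤ Real.log (1 + ∑ j ∈ t, ‖co j‖) + d * log⁺ ‖z‖ := by
  set s := ∑ j ∈ t, ‖co j‖
  set m := max 1 ‖z‖
  have hs : 0 ≤ s := Finset.sum_nonneg fun j _ => norm_nonneg _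
  have hm : 1 ≤ m := le_max_left _ _
  have hP : ‖z ^ d + ∑ j ∈ t, co j * z ^ j‖ ≤ (1 + s) * m ^ d := by
    calc ‖z ^ d + ∑ j ∈ t, co j * z ^ j‖ ≤ ‖z‖ ^ d + ‖∑ j ∈ t, co j * z ^ j‖ * m := by
          rw [← norm_pow]
          exact (norm_add_le _ _).trans (by gcongr; exact le_mul_of_one_le_right (norm_nonneg _) hm)
      _ ≤ m ^ d + s * m ^ d :=
          add_le_add (pow_le_pow_left₀ (norm_nonneg _) (le_max_right _ _) d)
            (norm_sum_mul_pow_mul_max_le ht co z)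
      _ = (1 + s) * m ^ d := by ring
  calc log⁺ ‖z ^ d + ∑ j ∈ t, co j * z ^ j‖ ≤ log⁺ ((1 + s) * m ^ d) :=
        Real.posLog_le_posLog (norm_nonneg _) hP
    _ ≤ log⁺ (1 + s) + log⁺ (m ^ d) := Real.posLog_mul
    _ = Real.log (1 + s) + d * log⁺ ‖z‖ := by
        rw [Real.posLog_pow, Real.posLog_eq_log_max_one (norm_nonneg z),
          Real.posLog_eq_log (by rw [abs_of_nonneg (by linarith)]; linarith),
          Real.posLog_eq_log (by rwa [abs_of_nonneg (by linarith)])]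

theorem mul_posLog_norm_le_posLog_norm_monic_add {𝕜 : Type*} [NormedField 𝕜] {t : Finset ℕ}
    {d : ℕ} (ht : ∀ j ∈ t, j < d) (co : ℕ → 𝕜) (z : 𝕜) :
    d * log⁺ ‖z‖ ≤ log⁺ ‖z ^ d + ∑ j ∈ t, co j * z ^ j‖
      + max (Real.log 2) (d * Real.log (2 * (1 + ∑ j ∈ t, ‖co j‖))) := by
  set s := ∑ j ∈ t, ‖co j‖
  have hs : 0 ≤ s := Finset.sum_nonneg fun j _ => norm_nonneg _
  -- For `‖z‖ ≥ max 1 (2 s)` the leading term dominates: `‖z ^ d + ⋯‖ ≥ ‖z‖ ^ d / 2`.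
  rcases le_or_gt (max 1 (2 * s)) ‖z‖ with hz | hz
  · have hz1 : 1 ≤ ‖z‖ := (le_max_left _ _).trans hz
    have hzpos : 0 < ‖z‖ := one_pos.trans_le hz1
    have hsum : ‖∑ j ∈ t, co j * z ^ j‖ * ‖z‖ ≤ s * ‖z‖ ^ d := by
      simpa only [max_eq_right hz1] using norm_sum_mul_pow_mul_max_le ht co z
    have hP : ‖z‖ ^ d / 2 ≤ ‖z ^ d + ∑ j ∈ t, co j * z ^ j‖ := by
      have h2 : 2 * ‖∑ j ∈ t, co j * z ^ j‖ ≤ ‖z‖ ^ d := by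
        have := (le_max_right _ _).trans hz
        refine le_of_mul_le_mul_right ?_ hzpos
        nlinarith [pow_nonneg hzpos.le d]
      have := norm_sub_le_norm_add (z ^ d) (∑ j ∈ t, co j * z ^ j)
      rw [norm_pow] at this
      linarith
    calc d * log⁺ ‖z‖ = Real.log (‖z‖ ^ d / 2) + Real.log 2 := by
          rw [Real.log_div (by positivity) two_ne_zero, Real.log_pow,
            Real.posLog_eq_log (by rwa [abs_norm])]
          ring
      _ ≤ log⁺ ‖z ^ d + ∑ j ∈ t, co j * z ^ j‖ + max (Real.log 2) (d * Real.log (2 * (1 + s))) := by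
          gcongr
          · exact (Real.log_le_log (by positivity) hP).trans (le_max_right _ _)
          · exact le_max_left _ _
  · have : log⁺ ‖z‖ ≤ Real.log (2 * (1 + s)) := by
      rw [← Real.posLog_eq_log (by rw [abs_of_nonneg (by linarith)]; linarith)]
      exact Real.posLog_le_posLog (norm_nonneg _)
        (hz.le.trans (max_le (by linarith) (by linarith)))
    have := Real.posLog_nonneg (x := ‖z ^ d + ∑ j ∈ t, co j * z ^ j‖)
    have := le_max_right (Real.log 2) (d * Real.log (2 * (1 + s)))
    nlinarith

theorem abs_posLog_norm_monic_sub_le {𝕜 : Type*} [NormedField 𝕜] {t : Finset ℕ} {d : ℕ}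
    (ht : ∀ j ∈ t, j < d) (co : ℕ → 𝕜) (z : 𝕜) :
    |log⁺ ‖z ^ d + ∑ j ∈ t, co j * z ^ j‖ - d * log⁺ ‖z‖|
      ≤ (d + 1) * Real.log (2 * (1 + ∑ j ∈ t, ‖co j‖)) := by
  set s := ∑ j ∈ t, ‖co j‖
  have hs : 0 ≤ s := Finset.sum_nonneg fun j _ => norm_nonneg _
  have hL1 : Real.log (1 + s) ≤ Real.log (2 * (1 + s)) := Real.log_le_log (by linarith) (by linarith)
  have hL2 : Real.log 2 ≤ Real.log (2 * (1 + s)) := Real.log_le_log two_pos (by linarith)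
  have hL : 0 ≤ Real.log (2 * (1 + s)) := (Real.log_nonneg one_le_two).trans hL2
  have hmax : max (Real.log 2) (d * Real.log (2 * (1 + s))) ≤ (d + 1) * Real.log (2 * (1 + s)) :=
    max_le (by nlinarith) (by nlinarith)
  have hupper := posLog_norm_monic_le ht co z
  have hlower := mul_posLog_norm_le_posLog_norm_monic_add ht co z
  rw [abs_le]
  constructor <;> nlinarith

theorem dist_div_pow_posLog_norm_iterate_le {E : Type*} [SeminormedAddCommGroup E] {p : E → E}
    {d K : ℝ} (hd : 1 < d) (hp : ∀ z, |log⁺ ‖p z‖ - d * log⁺ ‖z‖| ≤ K) {z : E} {L : ℝ}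
    (hL : Tendsto (fun n : ℕ => 1 / d ^ n * log⁺ ‖p^[n] z‖) atTop (𝓝 L)) (n : ℕ) :
    dist (1 / d ^ n * log⁺ ‖p^[n] z‖) L ≤ K / (d - 1) * (1 / d) ^ n := by
  have hd0 : 0 < d := one_pos.trans hd
  have hstep : ∀ n : ℕ, dist (1 / d ^ n * log⁺ ‖p^[n] z‖) (1 / d ^ (n + 1) * log⁺ ‖p^[n + 1] z‖)
      ≤ K / d * (1 / d) ^ n := fun n => by
    rw [dist_comm, Real.dist_eq, Function.iterate_succ_apply']
    calc |1 / d ^ (n + 1) * log⁺ ‖p (p^[n] z)‖ - 1 / d ^ n * log⁺ ‖p^[n] z‖|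
        = 1 / d ^ (n + 1) * |log⁺ ‖p (p^[n] z)‖ - d * log⁺ ‖p^[n] z‖| := by
          have : 1 / d ^ (n + 1) * log⁺ ‖p (p^[n] z)‖ - 1 / d ^ n * log⁺ ‖p^[n] z‖
              = 1 / d ^ (n + 1) * (log⁺ ‖p (p^[n] z)‖ - d * log⁺ ‖p^[n] z‖) := by
            rw [pow_succ]
            field_simp
          rw [this, abs_mul, abs_of_pos (by positivity)]
      _ ≤ 1 / d ^ (n + 1) * K := by gcongr; exact hp _
      _ = K / d * (1 / d) ^ n := by rw [div_pow, one_pow, pow_succ]; field_simp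
  calc dist (1 / d ^ n * log⁺ ‖p^[n] z‖) L ≤ K / d * (1 / d) ^ n / (1 - 1 / d) :=
        dist_le_of_le_geometric_of_tendsto _ _ ((div_lt_one hd0).2 hd) hstep hL n
    _ = K / (d - 1) * (1 / d) ^ n := by
        have : d - 1 ≠ 0 := by linarith
        field_simp

theorem tendstoLocallyUniformlyOn_of_dist_le_mul {ι X β : Type*} [TopologicalSpace X]
    [PseudoMetricSpace β] {l : Filter ι} {s : Set X} {F : ι → X → β} {f : X → β} {M : X → ℝ}
    {ε : ι → ℝ} (hM : ContinuousOn M s) (hε : Tendsto ε l (𝓝 0))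
    (h : ∀ i, ∀ x ∈ s, dist (F i x) (f x) ≤ M x * ε i) : TendstoLocallyUniformlyOn F f l s := by
  rw [Metric.tendstoLocallyUniformlyOn_iff]
  intro δ hδ x hx
  have hMx : 0 < |M x| + 1 := by positivity
  refine ⟨s ∩ M ⁻¹' ball (M x) 1, inter_mem self_mem_nhdsWithin
    ((hM x hx).preimage_mem_nhdsWithin (ball_mem_nhds _ one_pos)), ?_⟩
  filter_upwards [(tendsto_zero_iff_norm_tendsto_zero.1 hε).eventually
    (gt_mem_nhds (div_pos hδ hMx))] with i hi y ⟨hy, hMy⟩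
  have hMy' : |M y| ≤ |M x| + 1 := by
    have := abs_sub_abs_le_abs_sub (M y) (M x)
    rw [mem_preimage, mem_ball, Real.dist_eq] at hMy
    linarith
  rw [Real.norm_eq_abs, lt_div_iff₀ hMx] at hi
  calc dist (f y) (F i y) ≤ M y * ε i := dist_comm (f y) _ ▸ h i y hy
    _ ≤ |M y| * |ε i| := (le_abs_self _).trans (abs_mul _ _).le
    _ ≤ (|M x| + 1) * |ε i| := by gcongr
    _ < δ := by linarith

theorem tendstoLocallyUniformlyOn_div_pow_posLog_norm_iterate {X E : Type*} [TopologicalSpace X]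
    [SeminormedAddCommGroup E] {s : Set X} {p : X → E → E} {a : X → E} {d : ℝ} (hd : 1 < d)
    {K : X → ℝ} (hK : ContinuousOn K s) (hp : ∀ x ∈ s, ∀ z, |log⁺ ‖p x z‖ - d * log⁺ ‖z‖| ≤ K x)
    {G : X → ℝ}
    (hG : ∀ x ∈ s, Tendsto (fun n : ℕ => 1 / d ^ n * log⁺ ‖(p x)^[n] (a x)‖) atTop (𝓝 (G x))) :
    TendstoLocallyUniformlyOn (fun n x => 1 / d ^ n * log⁺ ‖(p x)^[n] (a x)‖) G atTop s :=
  tendstoLocallyUniformlyOn_of_dist_le_mul (hK.div_const _)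
    (tendsto_pow_atTop_nhds_zero_of_lt_one (by positivity) ((div_lt_one (one_pos.trans hd)).2 hd))
    fun n x hx => dist_div_pow_posLog_norm_iterate_le hd (hp x hx) (hG x hx) n

theorem le_circleAverage_of_tendstoLocallyUniformlyOn {ι : Type*} {l : Filter ι} [l.NeBot]
    [l.IsCountablyGenerated] {F : ι → ℂ → ℝ} {f : ℂ → ℝ} {U : Set ℂ} {c : ℂ} {R : ℝ}
    (hF : ∀ i, ContinuousOn (F i) U) (hlim : TendstoLocallyUniformlyOn F f l U)
    (hU : closedBall c |R| ⊆ U) (hsub : ∀ i, F i c ≤ Real.circleAverage (F i) c R) :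
    f c ≤ Real.circleAverage f c R := by
  have hγ : MapsTo (circleMap c R) (uIcc 0 (2 * π)) U := fun θ _ =>
    hU (sphere_subset_closedBall (circleMap_mem_sphere' c R θ))
  have hunif := (tendstoLocallyUniformlyOn_iff_tendstoUniformlyOn_of_compact isCompact_uIcc).1
    (hlim.comp _ hγ (continuous_circleMap c R).continuousOn)
  have hint := hunif.tendsto_intervalIntegral_of_continuousOn (μ := MeasureTheory.volume)
    (Eventually.of_forall fun i => (hF i).comp (continuous_circleMap c R).continuousOn hγ)
  exact le_of_tendsto_of_tendsto' (hlim.tendsto_at (hU (mem_closedBall_self (abs_nonneg R))))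
    (hint.const_smul (2 * π)⁻¹) hsub

theorem DifferentiableOn.iterate_apply {𝕜 E F : Type*} [NontriviallyNormedField 𝕜]
    [NormedAddCommGroup E] [NormedSpace 𝕜 E] [NormedAddCommGroup F] [NormedSpace 𝕜 F]
    {s : Set E} {p : E → F → F} {a : E → F}
    (hp : ∀ u : E → F, DifferentiableOn 𝕜 u s → DifferentiableOn 𝕜 (fun x => p x (u x)) s)
    (ha : DifferentiableOn 𝕜 a s) (n : ℕ) :
    DifferentiableOn 𝕜 (fun x => (p x)^[n] (a x)) s := by
  induction n with
  | zero => exact ha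
  | succ n ih => simpa only [Function.iterate_succ_apply'] using hp _ ih

theorem DifferentiableOn.iterate_monic {𝕜 E : Type*} [NontriviallyNormedField 𝕜]
    [NormedAddCommGroup E] [NormedSpace 𝕜 E] {s : Set E} {d : ℕ} {t : Finset ℕ} {c : E → ℕ → 𝕜}
    (hc : ∀ j ∈ t, DifferentiableOn 𝕜 (fun x => c x j) s) {a : E → 𝕜}
    (ha : DifferentiableOn 𝕜 a s) (n : ℕ) :
    DifferentiableOn 𝕜 (fun x => (fun z => z ^ d + ∑ j ∈ t, c x j * z ^ j)^[n] (a x)) s :=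
  ha.iterate_apply (p := fun x z => z ^ d + ∑ j ∈ t, c x j * z ^ j) (fun _ hu =>
    (hu.pow d).add (DifferentiableOn.fun_sum fun j hj => (hc j hj).mul (hu.pow j))) n

theorem tendstoLocallyUniformlyOn_div_pow_posLog_norm_iterate_monic {X 𝕜 : Type*}
    [TopologicalSpace X] [NormedField 𝕜] {s : Set X} {d : ℕ} (hd : 1 < d) {t : Finset ℕ}
    (ht : ∀ j ∈ t, j < d) {c : X → ℕ → 𝕜} (hc : ∀ j ∈ t, ContinuousOn (fun x => c x j) s)
    {a : X → 𝕜} {G : X → ℝ}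
    (hG : ∀ x ∈ s, Tendsto (fun n : ℕ => 1 / (d : ℝ) ^ n *
      log⁺ ‖(fun z => z ^ d + ∑ j ∈ t, c x j * z ^ j)^[n] (a x)‖) atTop (𝓝 (G x))) :
    TendstoLocallyUniformlyOn (fun n x => 1 / (d : ℝ) ^ n *
      log⁺ ‖(fun z => z ^ d + ∑ j ∈ t, c x j * z ^ j)^[n] (a x)‖) G atTop s :=
  tendstoLocallyUniformlyOn_div_pow_posLog_norm_iterate (by exact_mod_cast hd)
    (K := fun x => (d + 1) * Real.log (2 * (1 + ∑ j ∈ t, ‖c x j‖)))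
    (continuousOn_const.mul (ContinuousOn.log (continuousOn_const.mul (continuousOn_const.add
      (continuousOn_finsetSum _ fun j hj => (hc j hj).norm))) fun _ _ => by positivity))
    (fun _ _ z => abs_posLog_norm_monic_sub_le ht _ z) hG

/-- For a holomorphic family `(f_λ)` of monic centered polynomials of degree `d ≥ 2`
(coefficients `c_j(λ)` holomorphic on an open subset `Λ` of a complex Banach space, no
`z^{d-1}` term) and a holomorphic marked point `λ ↦ a(λ)`, the function
`λ ↦ G_{f_λ}(a(λ))` (where `G_{f_λ}(z) = lim dⁿ⁻¹ log⁺ |f_λⁿ(z)|` is the dynamical Green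
function) is continuous and plurisubharmonic on `Λ` (sub-mean value inequality on every
complex disk contained in `Λ`). -/
theorem green_of_marked_point_continuous_psh
    {E : Type*} [NormedAddCommGroup E] [NormedSpace ℂ E]
    (Λ : Set E) (hΛ : IsOpen Λ) (d : ℕ) (hd : 2 ≤ d)
    (c : E → ℕ → ℂ) (hc : ∀ j : ℕ, j < d - 1 → AnalyticOn ℂ (fun lam => c lam j) Λ)
    (f : E → ℂ → ℂ)
    (hf : ∀ lam : E, ∀ z : ℂ,
      f lam z = z ^ d + ∑ j ∈ Finset.range (d - 1), c lam j * z ^ j)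
    (a : E → ℂ) (ha : AnalyticOn ℂ a Λ)
    (G : E → ℝ)
    (hG : ∀ lam ∈ Λ, Tendsto
      (fun n : ℕ => (1 / (d : ℝ) ^ n) * posLog ‖(f lam)^[n] (a lam)‖)
      atTop (nhds (G lam))) :
    ContinuousOn G Λ ∧
      ∀ lam ∈ Λ, ∀ v : E, ∀ r : ℝ, 0 < r →
        (∀ w : ℂ, ‖w‖ ≤ r → lam + w • v ∈ Λ) →
        G lam ≤ (1 / (2 * Real.pi)) *
          ∫ θ in (0:ℝ)..(2 * Real.pi), G (lam + ((r : ℂ) * Complex.exp (θ * Complex.I)) • v) := by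
  obtain rfl : f = fun lam z => z ^ d + ∑ j ∈ Finset.range (d - 1), c lam j * z ^ j :=
    funext fun lam => funext (hf lam)
  simp only [posLog_eq_real_posLog] at hG
  have hcd : ∀ j ∈ Finset.range (d - 1), DifferentiableOn ℂ (fun lam => c lam j) Λ :=
    fun j hj => (hc j (Finset.mem_range.1 hj)).differentiableOn
  have hiter := ha.differentiableOn.iterate_monic (d := d) hcd
  set g : ℕ → E → ℝ := fun n lam => 1 / (d : ℝ) ^ n *
    log⁺ ‖(fun z => z ^ d + ∑ j ∈ Finset.range (d - 1), c lam j * z ^ j)^[n] (a lam)‖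
  have hgc : ∀ n, ContinuousOn (g n) Λ := fun n =>
    continuousOn_const.mul (Real.continuous_posLog.comp_continuousOn (hiter n).continuousOn.norm)
  have hlim : TendstoLocallyUniformlyOn g G atTop Λ :=
    tendstoLocallyUniformlyOn_div_pow_posLog_norm_iterate_monic hd
      (fun j hj => (Finset.mem_range.1 hj).trans_le (Nat.sub_le d 1))
      (fun j hj => (hcd j hj).continuousOn) hG
  refine ⟨hlim.continuousOn (Frequently.of_forall hgc), fun lam hlam v r hr hcirc => ?_⟩
  set φ : ℂ → E := fun w => lam + w • v
  have hφ : Differentiable ℂ φ := (differentiable_const _).add (differentiable_id.smul_const v)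
  have hU : closedBall 0 |r| ⊆ φ ⁻¹' Λ := fun w hw =>
    hcirc w (by rwa [mem_closedBall_zero_iff, abs_of_pos hr] at hw)
  have hsub : ∀ n, (g n ∘ φ) 0 ≤ Real.circleAverage (g n ∘ φ) 0 r := fun n => by
    simpa only [g, Function.comp_def, ← smul_eq_mul, Real.circleAverage_fun_smul] using
      mul_le_mul_of_nonneg_left ((hiter n).posLog_norm_comp_le_circleAverage hΛ hφ hr.ne' hU)
        (by positivity)
  have := le_circleAverage_of_tendstoLocallyUniformlyOn
    (fun n => (hgc n).comp hφ.continuous.continuousOn (mapsTo_preimage _ _))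
    (hlim.comp φ (mapsTo_preimage _ _) hφ.continuous.continuousOn) hU hsub
  simpa [φ, Real.circleAverage_def, circleMap] using this
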